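/- Let N ≥ 2 and ζ₁ < ζ₂ < ⋯ < ζ_{N+1} be real numbers; for j = 1,…,N set Ω_j = {x ∈ ℝ² : ζ_j < x₂ < ζ_{j+1}}. Let G : ℝ² × ℝ² → ℂ be a kernel, let f : ℝ² → ℂ be supported in {x : ζ₁ < x₂ < ζ_{N+1}}, and set f_j = f·1_{Ω_j}. Let f̄_j⁺ (j = 1,…,N−1) and f̄_j⁻ (j = 2,…,N) be as follows: f̄_1⁺ = f_1, f̄_N⁻ = f_N, each f̄_j^± is supported in the closure of Ω_j, for every j = 1,…,N−2 and every x with x₂ > ζ_{j+2} one has ∫_{Ω_j} f̄_j⁺(y)G(x,y)dy = ∫_{Ω_{j+1}} (f̄_{j+1}⁺(y) − f_{j+1}(y))G(x,y)dy, and for every j = 3,…,N and every x with x₂ < ζ_{j−1} one has ∫_{Ω_j} f̄_j⁻(y)G(x,y)dy = ∫_{Ω_{j−1}} (f̄_{j−1}⁻(y) − f_{j−1}(y))G(x,y)dy. Assume all functions y ↦ f̄_j^±(y)G(x,y) and y ↦ f(y)G(x,y) occurring below are Bochner integrable. Define ũ(x) = −∫_{ℝ²} f(y)G(x,y)dy;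 u_i⁺(x) = ∫_{ℝ²}(f̄_i⁺(y) + f_{i+1}(y))G(x,y)dy for i = 1,…,N−1; u_i⁻(x) = ∫_{Ω_i} f̄_i⁻(y)G(x,y)dy for i = 3,…,N; u_2⁻(x) = ∫_{ℝ²}(f̄_2⁻(y) + f_1(y))G(x,y)dy; and u_0⁺ ≡ 0, u_{N+1}⁻ ≡ 0. Then for every i = 1,…,N and every x ∈ Ω_i: ũ(x) = −( u_{i−1}⁺(x) + u_{i+1}⁻(x) ). -/

import Mathlib

/-!
Write `I(a, b)` for the integral of `f(y) G(x, y)` over the strip `a < y₂ < b`. Horizontal lines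
are Lebesgue-null, so `I` is additive over adjacent strips, and over `Ω_j` a function supported in
the closure of `Ω_j` has the same integral as over the whole plane. Unwinding the transfer
identities by induction gives `∫_{Ω_j} f̄_j⁺ G = I(ζ₁, ζ_{j+1})` for `x` above `Ω_j` and
`∫_{Ω_j} f̄_j⁻ G = I(ζ_j, ζ_{N+1})` for `x` below `Ω_j`. So for `x ∈ Ω_i` the two subproblem
solutions `u_{i−1}⁺` and `u_{i+1}⁻` are `I(ζ₁, ζ_{i+1})` and `I(ζ_{i+1}, ζ_{N+1})` (for `i = 1`,
`u_2⁻` alone is `I(ζ₁, ζ_{N+1})`), and these add up to `I(ζ₁, ζ_{N+1}) = -ũ(x)`.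
-/

open MeasureTheory

/-- The horizontal layer `Ω_j = {x ∈ ℝ² : ζ_j < x₂ < ζ_{j+1}}`. -/
def layer (ζ : ℕ → ℝ) (j : ℕ) : Set (ℝ × ℝ) := {x : ℝ × ℝ | ζ j < x.2 ∧ x.2 < ζ (j + 1)}

/-- The piece `f_j = f·1_{Ω_j}` of the source `f`. -/
noncomputable def piece (ζ : ℕ → ℝ) (f : ℝ × ℝ → ℂ) (j : ℕ) : ℝ × ℝ → ℂ :=
  (layer ζ j).indicator f

open Set

theorem monotoneOn_Icc_of_le_succ {α : Type*} [Preorder α] {f : ℕ → α} {a b : ℕ}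
    (hf : ∀ n, a ≤ n → n < b → f n ≤ f (n + 1)) : MonotoneOn f (Icc a b) := by
  rintro m ⟨ham, -⟩ n ⟨-, hnb⟩ hmn
  induction n, hmn using Nat.le_induction with
  | base => rfl
  | succ n hmn ih => exact (ih (by omega)).trans (hf n (by omega) (by omega))

theorem MonotoneOn.apply_le_apply_Icc {α : Type*} [Preorder α] {f : ℕ → α} {a b m n : ℕ}
    (hf : MonotoneOn f (Icc a b)) (h : a ≤ m ∧ m ≤ n ∧ n ≤ b) : f m ≤ f n :=
  hf ⟨h.1, h.2.1.trans h.2.2⟩ ⟨h.1.trans h.2.1, h.2.2⟩ h.2.1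

def strip {α : Type*} (a b : ℝ) : Set (α × ℝ) := Prod.snd ⁻¹' Ioo a b

theorem strip_self {α : Type*} (a : ℝ) : (strip a a : Set (α × ℝ)) = ∅ := by
  simp [strip]

section Strip

variable {α E : Type*} [MeasureSpace α] [NormedAddCommGroup E] [NormedSpace ℝ E]

theorem measurableSet_strip (a b : ℝ) : MeasurableSet (strip a b : Set (α × ℝ)) :=
  measurableSet_Ioo.preimage measurable_snd

theorem snd_preimage_ae_eq {s t : Set ℝ} (h : s =ᵐ[volume] t) :
    (Prod.snd ⁻¹' s : Set (α × ℝ)) =ᵐ[volume] Prod.snd ⁻¹' t :=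
  Measure.quasiMeasurePreserving_snd.preimage_ae_eq h

theorem strip_ae_eq_union {a b c : ℝ} (hab : a ≤ b) (hbc : b ≤ c) :
    strip a c =ᵐ[volume] (strip a b ∪ strip b c : Set (α × ℝ)) := by
  have h : Ioo a c =ᵐ[volume] (Ioo a b ∪ Ioo b c : Set ℝ) := by
    refine Ioo_ae_eq_Ioc.trans ?_
    rw [← Ioc_union_Ioc_eq_Ioc hab hbc]
    exact Ioo_ae_eq_Ioc.symm.union Ioo_ae_eq_Ioc.symm
  exact snd_preimage_ae_eq h

theorem setIntegral_strip_union {g : α × ℝ → E} {a b c : ℝ} (hab : a ≤ b) (hbc : b ≤ c)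
    (hg : Integrable g) :
    ∫ p in strip a c, g p = (∫ p in strip a b, g p) + ∫ p in strip b c, g p := by
  rw [setIntegral_congr_set (strip_ae_eq_union hab hbc)]
  have hdisj : Disjoint (strip a b : Set (α × ℝ)) (strip b c) :=
    (Ico_disjoint_Ico_same.mono Ioo_subset_Ico_self Ioo_subset_Ico_self).preimage Prod.snd
  rw [setIntegral_union hdisj (measurableSet_strip b c) hg.integrableOn hg.integrableOn]

theorem setIntegral_strip_eq_integral [TopologicalSpace α] {g : α × ℝ → E} {a b : ℝ}
    (hg : Function.support g ⊆ closure (strip a b)) :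
    ∫ p in strip a b, g p = ∫ p, g p := by
  have hcl : closure (strip a b : Set (α × ℝ)) ⊆ Prod.snd ⁻¹' Icc a b :=
    closure_minimal (fun _ hp => Ioo_subset_Icc_self hp) (isClosed_Icc.preimage continuous_snd)
  rw [setIntegral_congr_set (s := strip a b) (snd_preimage_ae_eq Ioo_ae_eq_Icc),
    setIntegral_eq_integral_of_forall_compl_eq_zero]
  exact fun p hp => Function.notMem_support.1 fun h => hp (hcl (hg h))

end Strip

section Layer

variable {ζ : ℕ → ℝ} {f : ℝ × ℝ → ℂ} {j : ℕ}

theorem layer_eq_strip (ζ : ℕ → ℝ) (j : ℕ) : layer ζ j = strip (ζ j) (ζ (j + 1)) := rfl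

theorem measurableSet_layer (ζ : ℕ → ℝ) (j : ℕ) : MeasurableSet (layer ζ j) :=
  measurableSet_strip _ _

theorem piece_mul_eq_indicator (g : ℝ × ℝ → ℂ) :
    (fun y => piece ζ f j y * g y) = (layer ζ j).indicator fun y => f y * g y :=
  funext fun _ => (indicator_mul_left _ _ _).symm

theorem integrable_piece_mul {g : ℝ × ℝ → ℂ} (hf : Integrable fun y => f y * g y) :
    Integrable fun y => piece ζ f j y * g y := by
  rw [piece_mul_eq_indicator]
  exact hf.indicator (measurableSet_layer ζ j)

theorem integral_piece_mul (g : ℝ × ℝ → ℂ) :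
    ∫ y, piece ζ f j y * g y = ∫ y in layer ζ j, f y * g y := by
  rw [piece_mul_eq_indicator, integral_indicator (measurableSet_layer ζ j)]

theorem setIntegral_layer_piece_mul (g : ℝ × ℝ → ℂ) :
    ∫ y in layer ζ j, piece ζ f j y * g y = ∫ y in layer ζ j, f y * g y :=
  setIntegral_congr_fun (measurableSet_layer ζ j) fun y hy => by
    simp only [piece, indicator_of_mem hy]

theorem setIntegral_layer_sub_piece_mul {h g : ℝ × ℝ → ℂ}
    (hh : Integrable fun y => h y * g y) (hf : Integrable fun y => f y * g y) :
    ∫ y in layer ζ j, (h y - piece ζ f j y) * g y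
      = (∫ y in layer ζ j, h y * g y) - ∫ y in layer ζ j, f y * g y := by
  rw [← integral_sub hh.integrableOn hf.integrableOn]
  refine setIntegral_congr_fun (measurableSet_layer ζ j) fun y hy => ?_
  simp only [piece, indicator_of_mem hy, sub_mul]

end Layer

section Chains

variable {N : ℕ} {ζ : ℕ → ℝ} {G : ℝ × ℝ → ℝ × ℝ → ℂ} {f : ℝ × ℝ → ℂ}
  {fbarp fbarm : ℕ → ℝ × ℝ → ℂ}

theorem setIntegral_layer_fbarp_mul (hζ : MonotoneOn ζ (Icc 1 (N + 1)))
    (hfbarp1 : fbarp 1 = piece ζ f 1)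
    (htransferp : ∀ j, 1 ≤ j → j ≤ N - 2 → ∀ x : ℝ × ℝ, ζ (j + 2) < x.2 →
      ∫ y in layer ζ j, fbarp j y * G x y
        = ∫ y in layer ζ (j + 1), (fbarp (j + 1) y - piece ζ f (j + 1) y) * G x y)
    (hint_fbarp : ∀ j, 1 ≤ j → j ≤ N - 1 → ∀ x : ℝ × ℝ,
      Integrable (fun y => fbarp j y * G x y))
    (hint_f : ∀ x : ℝ × ℝ, Integrable (fun y => f y * G x y))
    {j : ℕ} (hj : 1 ≤ j) (hjN : j ≤ N - 1) {x : ℝ × ℝ} (hx : ζ (j + 1) < x.2) :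
    ∫ y in layer ζ j, fbarp j y * G x y = ∫ y in strip (ζ 1) (ζ (j + 1)), f y * G x y := by
  induction j, hj using Nat.le_induction with
  | base => rw [hfbarp1, setIntegral_layer_piece_mul, layer_eq_strip]
  | succ j hj ih =>
    have hζj : ζ (j + 1) ≤ ζ (j + 2) := hζ.apply_le_apply_Icc (by omega)
    calc ∫ y in layer ζ (j + 1), fbarp (j + 1) y * G x y
        = (∫ y in layer ζ (j + 1), (fbarp (j + 1) y - piece ζ f (j + 1) y) * G x y)
          + ∫ y in layer ζ (j + 1), f y * G x y := by
          rw [setIntegral_layer_sub_piece_mul (hint_fbarp _ (by omega) hjN x) (hint_f x),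
            sub_add_cancel]
      _ = (∫ y in strip (ζ 1) (ζ (j + 1)), f y * G x y)
          + ∫ y in layer ζ (j + 1), f y * G x y := by
          rw [← htransferp j hj (by omega) x hx, ih (by omega) (hζj.trans_lt hx)]
      _ = ∫ y in strip (ζ 1) (ζ (j + 2)), f y * G x y :=
          (setIntegral_strip_union (hζ.apply_le_apply_Icc (by omega)) hζj
            (hint_f x)).symm

theorem setIntegral_layer_fbarm_mul (hζ : MonotoneOn ζ (Icc 1 (N + 1)))
    (hfbarmN : fbarm N = piece ζ f N)
    (htransferm : ∀ j, 3 ≤ j → j ≤ N → ∀ x : ℝ × ℝ, x.2 < ζ (j - 1) →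
      ∫ y in layer ζ j, fbarm j y * G x y
        = ∫ y in layer ζ (j - 1), (fbarm (j - 1) y - piece ζ f (j - 1) y) * G x y)
    (hint_fbarm : ∀ j, 2 ≤ j → j ≤ N → ∀ x : ℝ × ℝ,
      Integrable (fun y => fbarm j y * G x y))
    (hint_f : ∀ x : ℝ × ℝ, Integrable (fun y => f y * G x y))
    {j : ℕ} (hj : 2 ≤ j) (hjN : j ≤ N) {x : ℝ × ℝ} (hx : x.2 < ζ j) :
    ∫ y in layer ζ j, fbarm j y * G x y = ∫ y in strip (ζ j) (ζ (N + 1)), f y * G x y := by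
  induction hjN using Nat.decreasingInduction with
  | self => rw [hfbarmN, setIntegral_layer_piece_mul, layer_eq_strip]
  | of_succ j hjN ih =>
    have hζj : ζ j ≤ ζ (j + 1) := hζ.apply_le_apply_Icc (by omega)
    have htransfer := htransferm (j + 1) (by omega) hjN x (by simpa using hx)
    simp only [Nat.add_sub_cancel] at htransfer
    calc ∫ y in layer ζ j, fbarm j y * G x y
        = (∫ y in layer ζ j, (fbarm j y - piece ζ f j y) * G x y)
          + ∫ y in layer ζ j, f y * G x y := by
          rw [setIntegral_layer_sub_piece_mul (hint_fbarm j hj hjN.le x) (hint_f x),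
            sub_add_cancel]
      _ = (∫ y in layer ζ j, f y * G x y)
          + ∫ y in strip (ζ (j + 1)) (ζ (N + 1)), f y * G x y := by
          rw [← htransfer, ih (by omega) (hx.trans_le hζj), add_comm]
      _ = ∫ y in strip (ζ j) (ζ (N + 1)), f y * G x y :=
          (setIntegral_strip_union hζj (hζ.apply_le_apply_Icc (by omega))
            (hint_f x)).symm

theorem integral_fbarp_add_piece_mul (hζ : MonotoneOn ζ (Icc 1 (N + 1)))
    (hfbarp1 : fbarp 1 = piece ζ f 1)
    (hfbarp_supp : ∀ j, 1 ≤ j → j ≤ N - 1 →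
      Function.support (fbarp j) ⊆ closure (layer ζ j))
    (htransferp : ∀ j, 1 ≤ j → j ≤ N - 2 → ∀ x : ℝ × ℝ, ζ (j + 2) < x.2 →
      ∫ y in layer ζ j, fbarp j y * G x y
        = ∫ y in layer ζ (j + 1), (fbarp (j + 1) y - piece ζ f (j + 1) y) * G x y)
    (hint_fbarp : ∀ j, 1 ≤ j → j ≤ N - 1 → ∀ x : ℝ × ℝ,
      Integrable (fun y => fbarp j y * G x y))
    (hint_f : ∀ x : ℝ × ℝ, Integrable (fun y => f y * G x y))
    {j : ℕ} (hj : 1 ≤ j) (hjN : j ≤ N - 1) {x : ℝ × ℝ} (hx : ζ (j + 1) < x.2) :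
    ∫ y, (fbarp j y + piece ζ f (j + 1) y) * G x y
      = ∫ y in strip (ζ 1) (ζ (j + 2)), f y * G x y := by
  have hsupp : Function.support (fun y => fbarp j y * G x y) ⊆ closure (layer ζ j) :=
    (Function.support_mul_subset_left _ _).trans (hfbarp_supp j hj hjN)
  simp_rw [add_mul]
  rw [integral_add (hint_fbarp j hj hjN x) (integrable_piece_mul (hint_f x)),
    integral_piece_mul,
    ← setIntegral_strip_eq_integral hsupp, ← layer_eq_strip,
    setIntegral_layer_fbarp_mul hζ hfbarp1 htransferp hint_fbarp hint_f hj hjN hx]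
  exact (setIntegral_strip_union (hζ.apply_le_apply_Icc (by omega))
    (hζ.apply_le_apply_Icc (by omega)) (hint_f x)).symm

theorem integral_fbarm_two_add_piece_mul (hN : 2 ≤ N) (hζ : MonotoneOn ζ (Icc 1 (N + 1)))
    (hfbarmN : fbarm N = piece ζ f N)
    (hfbarm_supp : ∀ j, 2 ≤ j → j ≤ N →
      Function.support (fbarm j) ⊆ closure (layer ζ j))
    (htransferm : ∀ j, 3 ≤ j → j ≤ N → ∀ x : ℝ × ℝ, x.2 < ζ (j - 1) →
      ∫ y in layer ζ j, fbarm j y * G x y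
        = ∫ y in layer ζ (j - 1), (fbarm (j - 1) y - piece ζ f (j - 1) y) * G x y)
    (hint_fbarm : ∀ j, 2 ≤ j → j ≤ N → ∀ x : ℝ × ℝ,
      Integrable (fun y => fbarm j y * G x y))
    (hint_f : ∀ x : ℝ × ℝ, Integrable (fun y => f y * G x y))
    {x : ℝ × ℝ} (hx : x.2 < ζ 2) :
    ∫ y, (fbarm 2 y + piece ζ f 1 y) * G x y
      = ∫ y in strip (ζ 1) (ζ (N + 1)), f y * G x y := by
  have hsupp : Function.support (fun y => fbarm 2 y * G x y) ⊆ closure (layer ζ 2) :=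
    (Function.support_mul_subset_left _ _).trans (hfbarm_supp 2 le_rfl hN)
  simp_rw [add_mul]
  rw [integral_add (hint_fbarm 2 le_rfl hN x) (integrable_piece_mul (hint_f x)),
    integral_piece_mul,
    ← setIntegral_strip_eq_integral hsupp, ← layer_eq_strip,
    setIntegral_layer_fbarm_mul hζ hfbarmN htransferm hint_fbarm hint_f le_rfl hN hx, add_comm]
  exact (setIntegral_strip_union (hζ.apply_le_apply_Icc (by omega))
    (hζ.apply_le_apply_Icc (by omega)) (hint_f x)).symm

end Chains

/-- Theorem 2.3 of the paper: exactness of the PSTDDM in the whole space.  In each layer `Ω_i`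
the PML solution `ũ` is recovered as `ũ = −(u_{i−1}⁺ + u_{i+1}⁻)`. -/
theorem stmt_5
    (N : ℕ) (hN : 2 ≤ N)
    (ζ : ℕ → ℝ) (hζ : ∀ j, 1 ≤ j → j ≤ N → ζ j < ζ (j + 1))
    (G : ℝ × ℝ → ℝ × ℝ → ℂ)
    (f : ℝ × ℝ → ℂ)
    (hf_supp : Function.support f ⊆ {x : ℝ × ℝ | ζ 1 < x.2 ∧ x.2 < ζ (N + 1)})
    (fbarp fbarm : ℕ → ℝ × ℝ → ℂ)
    (hfbarp1 : fbarp 1 = piece ζ f 1)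
    (hfbarmN : fbarm N = piece ζ f N)
    (hfbarp_supp : ∀ j, 1 ≤ j → j ≤ N - 1 →
      Function.support (fbarp j) ⊆ closure (layer ζ j))
    (hfbarm_supp : ∀ j, 2 ≤ j → j ≤ N →
      Function.support (fbarm j) ⊆ closure (layer ζ j))
    (htransferp : ∀ j, 1 ≤ j → j ≤ N - 2 → ∀ x : ℝ × ℝ, ζ (j + 2) < x.2 →
      ∫ y in layer ζ j, fbarp j y * G x y
        = ∫ y in layer ζ (j + 1), (fbarp (j + 1) y - piece ζ f (j + 1) y) * G x y)
    (htransferm : ∀ j, 3 ≤ j → j ≤ N → ∀ x : ℝ × ℝ, x.2 < ζ (j - 1) →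
      ∫ y in layer ζ j, fbarm j y * G x y
        = ∫ y in layer ζ (j - 1), (fbarm (j - 1) y - piece ζ f (j - 1) y) * G x y)
    (hint_fbarp : ∀ j, 1 ≤ j → j ≤ N - 1 → ∀ x : ℝ × ℝ,
      Integrable (fun y => fbarp j y * G x y))
    (hint_fbarm : ∀ j, 2 ≤ j → j ≤ N → ∀ x : ℝ × ℝ,
      Integrable (fun y => fbarm j y * G x y))
    (hint_f : ∀ x : ℝ × ℝ, Integrable (fun y => f y * G x y))
    (utilde : ℝ × ℝ → ℂ)
    (hutilde : ∀ x : ℝ × ℝ, utilde x = -∫ y : ℝ × ℝ, f y * G x y)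
    (up um : ℕ → ℝ × ℝ → ℂ)
    (hup0 : ∀ x : ℝ × ℝ, up 0 x = 0)
    (hup : ∀ i, 1 ≤ i → i ≤ N - 1 → ∀ x : ℝ × ℝ,
      up i x = ∫ y : ℝ × ℝ, (fbarp i y + piece ζ f (i + 1) y) * G x y)
    (humN1 : ∀ x : ℝ × ℝ, um (N + 1) x = 0)
    (hum : ∀ i, 3 ≤ i → i ≤ N → ∀ x : ℝ × ℝ,
      um i x = ∫ y in layer ζ i, fbarm i y * G x y)
    (hum2 : ∀ x : ℝ × ℝ,
      um 2 x = ∫ y : ℝ × ℝ, (fbarm 2 y + piece ζ f 1 y) * G x y) :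
    ∀ i, 1 ≤ i → i ≤ N → ∀ x ∈ layer ζ i,
      utilde x = -(up (i - 1) x + um (i + 1) x) := by
  have hmono : MonotoneOn ζ (Icc 1 (N + 1)) :=
    monotoneOn_Icc_of_le_succ fun n h1 h2 => (hζ n h1 (by omega)).le
  intro i hi1 hiN x hx
  have htotal : utilde x = -∫ y in strip (ζ 1) (ζ (N + 1)), f y * G x y := by
    rw [hutilde, setIntegral_strip_eq_integral
      ((Function.support_mul_subset_left _ _).trans (hf_supp.trans subset_closure))]
  obtain rfl | hi2 : i = 1 ∨ 2 ≤ i := by omega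
  · rw [htotal, hup0, hum2, integral_fbarm_two_add_piece_mul hN hmono hfbarmN hfbarm_supp
      htransferm hint_fbarm hint_f hx.2, zero_add]
  obtain ⟨j, rfl⟩ : ∃ j, i = j + 1 := ⟨i - 1, by omega⟩
  have hdown : um (j + 1 + 1) x = ∫ y in strip (ζ (j + 1 + 1)) (ζ (N + 1)), f y * G x y := by
    obtain rfl | hjN := eq_or_lt_of_le hiN
    · rw [humN1, strip_self, Measure.restrict_empty, integral_zero_measure]
    · rw [hum (j + 1 + 1) (by omega) (by omega) x, setIntegral_layer_fbarm_mul hmono hfbarmN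
        htransferm hint_fbarm hint_f (by omega) (by omega) hx.2]
  rw [htotal, Nat.add_sub_cancel, hup j (by omega) (by omega) x, hdown,
    integral_fbarp_add_piece_mul hmono hfbarp1 hfbarp_supp htransferp hint_fbarp hint_f
      (by omega) (by omega) hx.1,
    setIntegral_strip_union (b := ζ (j + 2)) (hmono.apply_le_apply_Icc (by omega))
      (hmono.apply_le_apply_Icc (by omega)) (hint_f x)]
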